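/- Consider the 5-dimensional Lie algebra l₂ with structure equations de¹ = 2e¹², de² = e¹⁴, de³ = e¹⁵ − e²³, de⁴ = 2e²⁴, de⁵ = e²⁵ + e³⁴. Then the Jacobi identity holds, l₂ is perfect (l₂ = [l₂, l₂]), and the subspace h = span{e₁, e₂, e₄} is a 3-dimensional simple Lie subalgebra of l₂. -/
import Mathlib


/-- Standard basis of `ℝ⁵` (shifted: `e₁ = e 0`, …, `e₅ = e 4`). -/
noncomputable def e (i : Fin 5) : Fin 5 → ℝ := Pi.single i 1

/-- The Lie bracket of the algebra `l₂` with structure equations `de¹ = 2e¹²`, `de² = e¹⁴`,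
`de³ = e¹⁵ − e²³`, `de⁴ = 2e²⁴`, `de⁵ = e²⁵ + e³⁴` (via `de^k(X,Y) = −e^k([X,Y])`):
`[e₁,e₂] = −2e₁`, `[e₁,e₄] = −e₂`, `[e₁,e₅] = −e₃`, `[e₂,e₃] = e₃`, `[e₂,e₄] = −2e₄`,
`[e₂,e₅] = −e₅`, `[e₃,e₄] = −e₅`, all other basis brackets zero. -/
noncomputable def br2 (X Y : Fin 5 → ℝ) : Fin 5 → ℝ :=
  (X 0 * Y 1 - X 1 * Y 0) • (-2 : ℝ) • e 0 +
  (X 0 * Y 3 - X 3 * Y 0) • (-(e 1)) +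
  (X 0 * Y 4 - X 4 * Y 0) • (-(e 2)) +
  (X 1 * Y 2 - X 2 * Y 1) • e 2 +
  (X 1 * Y 3 - X 3 * Y 1) • (-2 : ℝ) • e 3 +
  (X 1 * Y 4 - X 4 * Y 1) • (-(e 4)) +
  (X 2 * Y 3 - X 3 * Y 2) • (-(e 4))

/-- The subspace `h = span{e₁, e₂, e₄}`. -/
noncomputable def hSub : Submodule ℝ (Fin 5 → ℝ) := Submodule.span ℝ {e 0, e 1, e 3}

lemma br2_eq (X Y : Fin 5 → ℝ) : br2 X Y =
    ![-2*(X 0 * Y 1 - X 1 * Y 0),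
      -(X 0 * Y 3 - X 3 * Y 0),
      -(X 0 * Y 4 - X 4 * Y 0) + (X 1 * Y 2 - X 2 * Y 1),
      -2*(X 1 * Y 3 - X 3 * Y 1),
      -(X 1 * Y 4 - X 4 * Y 1) - (X 2 * Y 3 - X 3 * Y 2)] := by
  funext i
  fin_cases i <;> simp [br2, e, Pi.single_apply] <;> ring

lemma jac : ∀ X Y Z : Fin 5 → ℝ, br2 X (br2 Y Z) + br2 Y (br2 Z X) + br2 Z (br2 X Y) = 0 := by
  intro X Y Z
  funext i
  fin_cases i <;> simp [br2_eq] <;> ring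

lemma perfect : Submodule.span ℝ {v : Fin 5 → ℝ | ∃ X Y, v = br2 X Y} = ⊤ := by
  rw [eq_top_iff]
  have hb : ∀ X Y : Fin 5 → ℝ, br2 X Y ∈ Submodule.span ℝ {v : Fin 5 → ℝ | ∃ X Y, v = br2 X Y} :=
    fun X Y => Submodule.subset_span ⟨X, Y, rfl⟩
  have hm0 : e 0 ∈ Submodule.span ℝ {v : Fin 5 → ℝ | ∃ X Y, v = br2 X Y} := by
    have h : e 0 = (-(1:ℝ)/2) • br2 (e 0) (e 1) := by
      funext j; fin_cases j <;> simp [br2_eq, e, Pi.single_apply] <;> norm_num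
    rw [h]; exact Submodule.smul_mem _ _ (hb _ _)
  have hm1 : e 1 ∈ Submodule.span ℝ {v : Fin 5 → ℝ | ∃ X Y, v = br2 X Y} := by
    have h : e 1 = (-(1:ℝ)) • br2 (e 0) (e 3) := by
      funext j; fin_cases j <;> simp [br2_eq, e, Pi.single_apply] <;> norm_num
    rw [h]; exact Submodule.smul_mem _ _ (hb _ _)
  have hm2 : e 2 ∈ Submodule.span ℝ {v : Fin 5 → ℝ | ∃ X Y, v = br2 X Y} := by
    have h : e 2 = (-(1:ℝ)) • br2 (e 0) (e 4) := by
      funext j; fin_cases j <;> simp [br2_eq, e, Pi.single_apply] <;> norm_num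
    rw [h]; exact Submodule.smul_mem _ _ (hb _ _)
  have hm3 : e 3 ∈ Submodule.span ℝ {v : Fin 5 → ℝ | ∃ X Y, v = br2 X Y} := by
    have h : e 3 = (-(1:ℝ)/2) • br2 (e 1) (e 3) := by
      funext j; fin_cases j <;> simp [br2_eq, e, Pi.single_apply] <;> norm_num
    rw [h]; exact Submodule.smul_mem _ _ (hb _ _)
  have hm4 : e 4 ∈ Submodule.span ℝ {v : Fin 5 → ℝ | ∃ X Y, v = br2 X Y} := by
    have h : e 4 = (-(1:ℝ)) • br2 (e 1) (e 4) := by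
      funext j; fin_cases j <;> simp [br2_eq, e, Pi.single_apply] <;> norm_num
    rw [h]; exact Submodule.smul_mem _ _ (hb _ _)
  intro v _
  have hv : v = v 0 • e 0 + v 1 • e 1 + v 2 • e 2 + v 3 • e 3 + v 4 • e 4 := by
    funext j; fin_cases j <;> simp [e, Pi.single_apply]
  rw [hv]
  refine Submodule.add_mem _ (Submodule.add_mem _ (Submodule.add_mem _
    (Submodule.add_mem _ ?_ ?_) ?_) ?_) ?_ <;>
    exact Submodule.smul_mem _ _ (by assumption)

def K : Submodule ℝ (Fin 5 → ℝ) where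
  carrier := {v | v 2 = 0 ∧ v 4 = 0}
  add_mem' := by rintro a b ⟨h1, h2⟩ ⟨h3, h4⟩; constructor <;> simp_all
  zero_mem' := by simp
  smul_mem' := by rintro c a ⟨h1, h2⟩; constructor <;> simp_all

lemma mem_K_of (v : Fin 5 → ℝ) (h : v 2 = 0 ∧ v 4 = 0) :
    v ∈ Submodule.span ℝ ({e 0, e 1, e 3} : Set (Fin 5 → ℝ)) := by
  have hv : v = v 0 • e 0 + v 1 • e 1 + v 3 • e 3 := by
    funext j; fin_cases j <;> simp [e, Pi.single_apply, h.1, h.2]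
  rw [hv]
  refine Submodule.add_mem _ (Submodule.add_mem _ ?_ ?_) ?_ <;>
    exact Submodule.smul_mem _ _ (Submodule.subset_span (by simp))

lemma hSub_eq : hSub = K := by
  apply le_antisymm
  · rw [hSub, Submodule.span_le]
    rintro v (rfl | rfl | rfl) <;> constructor <;> simp [e, Pi.single_apply]
  · intro v hv
    exact mem_K_of v hv

lemma hSub_mem_iff (v : Fin 5 → ℝ) : v ∈ hSub ↔ v 2 = 0 ∧ v 4 = 0 := by
  rw [hSub_eq]; exact Iff.rfl

lemma closed : ∀ X Y : Fin 5 → ℝ, X ∈ hSub → Y ∈ hSub → br2 X Y ∈ hSub := by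
  intro X Y hX hY
  rw [hSub_mem_iff] at *
  obtain ⟨hX2, hX4⟩ := hX
  obtain ⟨hY2, hY4⟩ := hY
  constructor <;> simp [br2_eq, hX2, hX4, hY2, hY4]

lemma indep : LinearIndependent ℝ ![e 0, e 1, (e 3 : Fin 5 → ℝ)] := by
  rw [Fintype.linearIndependent_iff]
  intro g hg i
  have h0 := congrFun hg 0
  have h1 := congrFun hg 1
  have h3 := congrFun hg 3
  simp [e, Pi.single_apply, Fin.sum_univ_three, Matrix.vecHead, Matrix.vecTail] at h0 h1 h3
  fin_cases i <;> simp_all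

lemma rank3 : Module.finrank ℝ hSub = 3 := by
  have h : hSub = Submodule.span ℝ (Set.range ![e 0, e 1, (e 3 : Fin 5 → ℝ)]) := by
    rw [hSub]
    congr 1
    ext x
    simp [Matrix.range_cons, Matrix.range_empty]
    tauto
  rw [h, finrank_span_eq_card indep]
  simp

lemma e0_mem : e 0 ∈ hSub := Submodule.subset_span (by simp)
lemma e1_mem : e 1 ∈ hSub := Submodule.subset_span (by simp)
lemma e3_mem : e 3 ∈ hSub := Submodule.subset_span (by simp)

lemma simple_part :
    ∀ I : Submodule ℝ (Fin 5 → ℝ), I ≤ hSub →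
      (∀ X Y : Fin 5 → ℝ, X ∈ hSub → Y ∈ I → br2 X Y ∈ I) → I = ⊥ ∨ I = hSub := by
  intro I hle hcl
  by_cases hbot : I = ⊥
  · exact Or.inl hbot
  right
  obtain ⟨v, hvI, hv0⟩ := Submodule.exists_mem_ne_zero_of_ne_bot hbot
  obtain ⟨hv2, hv4⟩ := (hSub_mem_iff v).1 (hle hvI)
  have he1 : e 1 ∈ I := by
    by_cases hc : v 3 ≠ 0
    · have key : br2 (e 0) (br2 (e 0) v) = (2 * v 3) • e 0 := by
        funext j; fin_cases j <;> simp [br2_eq, e, Pi.single_apply] <;> ring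
      have he0 : e 0 ∈ I := by
        have h1 : br2 (e 0) (br2 (e 0) v) ∈ I := hcl _ _ e0_mem (hcl _ _ e0_mem hvI)
        rw [key] at h1
        have := Submodule.smul_mem I (2 * v 3)⁻¹ h1
        rwa [smul_smul, inv_mul_cancel₀ (by simpa using hc), one_smul] at this
      have hb : br2 (e 3) (e 0) = e 1 := by
        funext j; fin_cases j <;> simp [br2_eq, e, Pi.single_apply]
      rw [← hb]; exact hcl _ _ e3_mem he0
    · push_neg at hc
      by_cases ha : v 0 ≠ 0
      · have key : br2 (e 3) (br2 (e 3) v) = (2 * v 0) • e 3 := by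
          funext j; fin_cases j <;> simp [br2_eq, e, Pi.single_apply, hv2] <;> ring
        have he3 : e 3 ∈ I := by
          have h1 : br2 (e 3) (br2 (e 3) v) ∈ I := hcl _ _ e3_mem (hcl _ _ e3_mem hvI)
          rw [key] at h1
          have := Submodule.smul_mem I (2 * v 0)⁻¹ h1
          rwa [smul_smul, inv_mul_cancel₀ (by simpa using ha), one_smul] at this
        have hb : br2 (e 0) (e 3) = -(e 1) := by
          funext j; fin_cases j <;> simp [br2_eq, e, Pi.single_apply]
        have := hcl _ _ e0_mem he3
        rw [hb] at this
        simpa using Submodule.neg_mem I this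
      · push_neg at ha
        have hbne : v 1 ≠ 0 := by
          intro hb1
          apply hv0
          funext j; fin_cases j <;> simp [ha, hb1, hv2, hc, hv4]
        have hveq : v = v 1 • e 1 := by
          funext j; fin_cases j <;> simp [e, Pi.single_apply, ha, hv2, hc, hv4]
        have hI2 : v 1 • e 1 ∈ I := hveq ▸ hvI
        have := Submodule.smul_mem I (v 1)⁻¹ hI2
        rwa [smul_smul, inv_mul_cancel₀ hbne, one_smul] at this
  have he0 : e 0 ∈ I := by
    have hb : br2 (e 0) (e 1) = (-2 : ℝ) • e 0 := by
      funext j; fin_cases j <;> simp [br2_eq, e, Pi.single_apply]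
    have h1 := hcl _ _ e0_mem he1
    rw [hb] at h1
    have := Submodule.smul_mem I (-2 : ℝ)⁻¹ h1
    rwa [smul_smul, inv_mul_cancel₀ (by norm_num), one_smul] at this
  have he3 : e 3 ∈ I := by
    have hb : br2 (e 3) (e 1) = (2 : ℝ) • e 3 := by
      funext j; fin_cases j <;> simp [br2_eq, e, Pi.single_apply]
    have h1 := hcl _ _ e3_mem he1
    rw [hb] at h1
    have := Submodule.smul_mem I (2 : ℝ)⁻¹ h1
    rwa [smul_smul, inv_mul_cancel₀ (by norm_num), one_smul] at this
  apply le_antisymm hle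
  rw [hSub, Submodule.span_le]
  rintro x (rfl | rfl | rfl) <;> assumption

lemma nonab : ∃ X Y : Fin 5 → ℝ, X ∈ hSub ∧ Y ∈ hSub ∧ br2 X Y ≠ 0 := by
  refine ⟨e 0, e 1, e0_mem, e1_mem, ?_⟩
  intro h
  have := congrFun h 0
  simp [br2_eq, e, Pi.single_apply] at this

/-- For the 5-dimensional Lie algebra `l₂`: the Jacobi identity holds, `l₂` is perfect
(`l₂ = [l₂, l₂]`), and `h = span{e₁,e₂,e₄}` is a Lie subalgebra which is 3-dimensional and
simple (its only ideals are `0` and `h`, and it is nonabelian). -/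
theorem stmt19 :
    (∀ X Y Z : Fin 5 → ℝ, br2 X (br2 Y Z) + br2 Y (br2 Z X) + br2 Z (br2 X Y) = 0) ∧
    Submodule.span ℝ {v : Fin 5 → ℝ | ∃ X Y, v = br2 X Y} = ⊤ ∧
    (∀ X Y : Fin 5 → ℝ, X ∈ hSub → Y ∈ hSub → br2 X Y ∈ hSub) ∧
    Module.finrank ℝ hSub = 3 ∧
    (∃ X Y : Fin 5 → ℝ, X ∈ hSub ∧ Y ∈ hSub ∧ br2 X Y ≠ 0) ∧
    (∀ I : Submodule ℝ (Fin 5 → ℝ), I ≤ hSub →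
      (∀ X Y : Fin 5 → ℝ, X ∈ hSub → Y ∈ I → br2 X Y ∈ I) → I = ⊥ ∨ I = hSub) := by
  exact ⟨jac, perfect, closed, rank3, nonab, simple_part⟩
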